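/- Let q be a prime power, k ≥ 2, 1 ≤ h ≤ k, and let W_1, …, W_N be pairwise distinct h-dimensional F_q-subspaces of F_q^k such that W_1 ∪ … ∪ W_N is a strong blocking set in F_q^k. Then N ≥ ⌊(k−1)/h⌋ + ⌈k/h⌉. -/

import Mathlib

/-!
Let `m = ⌊(k-1)/h⌋`. If `N ≤ 2m`, split the subspaces into two groups of at most `m`; each group
spans a subspace of dimension at most `mh ≤ k - 1`, so the union lies in `A ∪ B` with `A`, `B`
proper. Such a set is never strongly blocking. If `A + B = V`, a hyperplane `H ⊇ A ∩ B` containing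
neither `A` nor `B` meets `A ∪ B` in a set spanning `(A ∩ H) + (B ∩ H)`, of dimension `k - 2`.
Otherwise a hyperplane `H ⊄ A + B` meets `A + B` in a proper subspace of `H`.
-/

open Module Submodule

variable {K V : Type*} [Field K] [AddCommGroup V] [Module K V]

variable (K) in
def IsStrongBlockingSet (S : Set V) : Prop :=
  ∀ H : Submodule K V, finrank K H + 1 = finrank K V → span K (S ∩ H) = H

lemma Submodule.exists_dual_le_ker_apply_ne_zero {p : Submodule K V} {x : V} (hx : x ∉ p) :
    ∃ f : Dual K V, p ≤ LinearMap.ker f ∧ f x ≠ 0 := by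
  obtain ⟨f, hfx, hf⟩ := p.exists_dual_map_eq_bot_of_notMem hx inferInstance
  exact ⟨f, LinearMap.le_ker_iff_map.2 hf, hfx⟩

section FiniteDimensional

variable [FiniteDimensional K V]

lemma Submodule.finrank_inf_ker_add_one {A : Submodule K V} {f : Dual K V}
    (hA : ¬ A ≤ LinearMap.ker f) : finrank K ↥(A ⊓ LinearMap.ker f) + 1 = finrank K A := by
  have hf : f.domRestrict A ≠ 0 := fun h =>
    hA fun x hx => by simpa using LinearMap.congr_fun h ⟨x, hx⟩
  rw [← Module.Dual.finrank_ker_add_one_of_ne_zero hf, ← map_comap_subtype,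
    LinearMap.ker_domRestrict, finrank_map_subtype_eq]

lemma Submodule.finrank_sup_inf_ker_add_two {A B : Submodule K V} {f : Dual K V}
    (hA : ¬ A ≤ LinearMap.ker f) (hB : ¬ B ≤ LinearMap.ker f) (hAB : A ⊓ B ≤ LinearMap.ker f) :
    finrank K ↥(A ⊓ LinearMap.ker f ⊔ B ⊓ LinearMap.ker f) + 2 = finrank K ↥(A ⊔ B) := by
  have hinf : A ⊓ LinearMap.ker f ⊓ (B ⊓ LinearMap.ker f) = A ⊓ B := by
    rw [inf_inf_inf_comm, inf_idem, inf_eq_left.2 hAB]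
  have hH := finrank_sup_add_finrank_inf_eq (A ⊓ LinearMap.ker f) (B ⊓ LinearMap.ker f)
  rw [hinf] at hH
  have := finrank_sup_add_finrank_inf_eq A B
  have := finrank_inf_ker_add_one hA
  have := finrank_inf_ker_add_one hB
  omega

lemma exists_hyperplane_finrank_sup_inf_lt_of_sup_eq_top {A B : Submodule K V}
    (hA : A ≠ ⊤) (hB : B ≠ ⊤) (hAB : A ⊔ B = ⊤) :
    ∃ H : Submodule K V, finrank K H + 1 = finrank K V ∧
      finrank K ↥(A ⊓ H ⊔ B ⊓ H) < finrank K H := by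
  obtain ⟨a, haA, haB⟩ : ∃ a ∈ A, a ∉ B :=
    SetLike.not_le_iff_exists.1 fun h => hB (top_unique (hAB ▸ sup_le h le_rfl))
  obtain ⟨b, hbB, hbA⟩ : ∃ b ∈ B, b ∉ A :=
    SetLike.not_le_iff_exists.1 fun h => hA (top_unique (hAB ▸ sup_le le_rfl h))
  obtain ⟨f₁, hBf₁, hf₁a⟩ := exists_dual_le_ker_apply_ne_zero haB
  obtain ⟨f₂, hAf₂, hf₂b⟩ := exists_dual_le_ker_apply_ne_zero hbA
  -- `f₁` kills `B` and `f₂` kills `A`, so `f₁ + f₂` kills `A ⊓ B` but neither `a` nor `b`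
  have hfa : (f₁ + f₂) a ≠ 0 := by simpa [LinearMap.mem_ker.1 (hAf₂ haA)] using hf₁a
  have hfb : (f₁ + f₂) b ≠ 0 := by simpa [LinearMap.mem_ker.1 (hBf₁ hbB)] using hf₂b
  have hABf : A ⊓ B ≤ LinearMap.ker (f₁ + f₂) := fun x hx => by
    simp [LinearMap.mem_ker.1 (hBf₁ hx.2), LinearMap.mem_ker.1 (hAf₂ hx.1)]
  have hf : finrank K (LinearMap.ker (f₁ + f₂)) + 1 = finrank K V :=
    Module.Dual.finrank_ker_add_one_of_ne_zero fun h => hfa (by simp [h])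
  have := finrank_sup_inf_ker_add_two (fun h => hfa (h haA)) (fun h => hfb (h hbB)) hABf
  rw [hAB, finrank_top] at this
  exact ⟨_, hf, by omega⟩

lemma exists_hyperplane_finrank_inf_lt {E : Submodule K V} (hE : E ≠ ⊤)
    (hV : 2 ≤ finrank K V) :
    ∃ H : Submodule K V, finrank K H + 1 = finrank K V ∧ finrank K ↥(E ⊓ H) < finrank K H := by
  obtain ⟨v, -, hvE⟩ := SetLike.exists_of_lt hE.lt_top
  have hv : K ∙ v ≠ ⊤ := fun h => by
    have := finrank_span_le_card (R := K) ({v} : Set V)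
    rw [h, finrank_top, Set.toFinset_singleton, Finset.card_singleton] at this
    omega
  obtain ⟨w, -, hw⟩ := SetLike.exists_of_lt hv.lt_top
  obtain ⟨f, hvf, hfw⟩ := exists_dual_le_ker_apply_ne_zero hw
  refine ⟨LinearMap.ker f, Module.Dual.finrank_ker_add_one_of_ne_zero (by aesop), ?_⟩
  exact finrank_lt_finrank_of_lt
    (inf_lt_right.2 fun h => hvE (h (hvf (mem_span_singleton_self v))))

lemma exists_hyperplane_finrank_sup_inf_lt {A B : Submodule K V} (hA : A ≠ ⊤) (hB : B ≠ ⊤)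
    (hV : 2 ≤ finrank K V) :
    ∃ H : Submodule K V, finrank K H + 1 = finrank K V ∧
      finrank K ↥(A ⊓ H ⊔ B ⊓ H) < finrank K H := by
  by_cases hAB : A ⊔ B = ⊤
  · exact exists_hyperplane_finrank_sup_inf_lt_of_sup_eq_top hA hB hAB
  obtain ⟨H, hH, hlt⟩ := exists_hyperplane_finrank_inf_lt hAB hV
  refine ⟨H, hH, lt_of_le_of_lt (finrank_mono ?_) hlt⟩
  exact sup_le (inf_le_inf_right H le_sup_left) (inf_le_inf_right H le_sup_right)

lemma IsStrongBlockingSet.not_subset_union {S : Set V} (hS : IsStrongBlockingSet K S)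
    (hV : 2 ≤ finrank K V) {A B : Submodule K V} (hA : A ≠ ⊤) (hB : B ≠ ⊤) :
    ¬ S ⊆ A ∪ B := by
  intro hSAB
  obtain ⟨H, hH, hlt⟩ := exists_hyperplane_finrank_sup_inf_lt hA hB hV
  have hspan : span K (S ∩ H) ≤ A ⊓ H ⊔ B ⊓ H := by
    rw [span_le]
    rintro x ⟨hxS, hxH⟩
    rcases hSAB hxS with hxA | hxB
    · exact mem_sup_left ⟨hxA, hxH⟩
    · exact mem_sup_right ⟨hxB, hxH⟩
  rw [hS H hH] at hspan
  exact hlt.not_ge (finrank_mono hspan)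

lemma Submodule.finrank_finset_sup_le {ι : Type*} (s : Finset ι) (W : ι → Submodule K V) {h : ℕ}
    (hW : ∀ i ∈ s, finrank K (W i) ≤ h) : finrank K ↥(s.sup W) ≤ s.card * h := by
  classical
  induction s using Finset.induction_on with
  | empty => simp
  | insert a s has ih =>
    rw [Finset.sup_insert, Finset.card_insert_of_notMem has, add_one_mul, add_comm]
    refine (finrank_add_le_finrank_add_finrank _ _).trans (add_le_add ?_ ?_)
    · exact hW a (Finset.mem_insert_self a s)
    · exact ih fun i hi => hW i (Finset.mem_insert_of_mem hi)

end FiniteDimensional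

lemma Finset.exists_card_le_and_card_compl_le {ι : Type*} [Fintype ι] [DecidableEq ι] {m : ℕ}
    (h : Fintype.card ι ≤ m + m) : ∃ t : Finset ι, t.card ≤ m ∧ tᶜ.card ≤ m := by
  obtain ⟨t, -, ht⟩ :=
    Finset.exists_subset_card_eq (s := Finset.univ) (min_le_right m (Fintype.card ι))
  refine ⟨t, ht ▸ min_le_left _ _, ?_⟩
  rw [Finset.card_compl, ht]
  omega

lemma Nat.ceilDiv_eq_pred_div_add_one {a b : ℕ} (ha : 1 ≤ a) (hb : 1 ≤ b) :
    a ⌈/⌉ b = (a - 1) / b + 1 := by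
  rw [Nat.ceilDiv_eq_add_pred_div, show a + b - 1 = a - 1 + b by omega,
    Nat.add_div_right _ hb]

theorem stmt_7_general (k h N : ℕ) (hk : 2 ≤ k) (hh1 : 1 ≤ h)
    (F : Type) [Field F]
    (W : Fin N → Submodule F (Fin k → F))
    (hdim : ∀ i, Module.finrank F (W i) = h)
    (hSBS : ∀ H : Submodule F (Fin k → F), Module.finrank F H = k - 1 →
      Submodule.span F ((⋃ i, (W i : Set (Fin k → F))) ∩ (H : Set (Fin k → F))) = H) :
    (k - 1) / h + k ⌈/⌉ h ≤ N := by
  have hV : finrank F (Fin k → F) = k := finrank_fin_fun F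
  have hS : IsStrongBlockingSet F (⋃ i, (W i : Set (Fin k → F))) :=
    fun H hH => hSBS H (by omega)
  rw [Nat.ceilDiv_eq_pred_div_add_one (by omega) hh1]
  by_contra! hN
  obtain ⟨t, ht, htc⟩ := Finset.exists_card_le_and_card_compl_le (ι := Fin N) (m := (k - 1) / h)
    (by simpa using Nat.lt_succ_iff.1 hN)
  have hproper (s : Finset (Fin N)) (hs : s.card ≤ (k - 1) / h) : s.sup W ≠ ⊤ := by
    refine (lt_top_of_finrank_lt_finrank ?_).ne
    calc finrank F ↥(s.sup W) ≤ s.card * h := finrank_finset_sup_le s W fun i _ => (hdim i).le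
      _ ≤ (k - 1) / h * h := Nat.mul_le_mul_right h hs
      _ < finrank F (Fin k → F) := by rw [hV]; have := Nat.div_mul_le_self (k - 1) h; omega
  refine hS.not_subset_union (by omega) (hproper t ht) (hproper tᶜ htc) ?_
  refine Set.iUnion_subset fun i => ?_
  by_cases hi : i ∈ t
  · exact Set.subset_union_of_subset_left (Finset.le_sup (f := W) hi) _
  · exact Set.subset_union_of_subset_right (Finset.le_sup (f := W) (Finset.mem_compl.2 hi)) _

/-- The number of pairwise distinct `h`-dimensional subspaces of `F_q^k` whose union is a
strong blocking set is at least `⌊(k-1)/h⌋ + ⌈k/h⌉`. -/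
theorem stmt_7 (q k h N : ℕ) (hq : IsPrimePow q) (hk : 2 ≤ k) (hh1 : 1 ≤ h) (hhk : h ≤ k)
    (F : Type) [Field F] [Fintype F] (hcard : Fintype.card F = q)
    (W : Fin N → Submodule F (Fin k → F))
    (hdim : ∀ i, Module.finrank F (W i) = h)
    (hdistinct : Function.Injective W)
    (hSBS : ∀ H : Submodule F (Fin k → F), Module.finrank F H = k - 1 →
      Submodule.span F ((⋃ i, (W i : Set (Fin k → F))) ∩ (H : Set (Fin k → F))) = H) :
    (k - 1) / h + k ⌈/⌉ h ≤ N :=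
  stmt_7_general k h N hk hh1 F W hdim hSBS
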